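/- Let F_hex = x1x2x3x4 + x2x3x6x7 + x3x4x7x8 + x1x4x5x8 + x1x2x5x6 + x5x6x7x8 and A = ℝ[∂_1,…,∂_8]/Ann(F_hex). Then ℓ = ∂_1 + ∂_2 + ⋯ + ∂_8 is a strong Lefschetz element of A (so A has the strong Lefschetz property), but A does not satisfy the Hodge–Riemann relation with respect to ℓ. -/

import Mathlib

open MvPolynomial

noncomputable section

lemma pderiv_commute {n : ℕ} (i j : Fin n) (f : MvPolynomial (Fin n) ℝ) :
    pderiv i (pderiv j f) = pderiv j (pderiv i f) := by
  rcases eq_or_ne i j with rfl | hij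
  · rfl
  · induction f using MvPolynomial.induction_on' with
    | monomial m a =>
        simp only [pderiv_monomial]
        have h1 : (m - Finsupp.single j 1 : Fin n →₀ ℕ) i = m i := by
          rw [Finsupp.tsub_apply, Finsupp.single_eq_of_ne' hij.symm, tsub_zero]
        have h2 : (m - Finsupp.single i 1 : Fin n →₀ ℕ) j = m j := by
          rw [Finsupp.tsub_apply, Finsupp.single_eq_of_ne' hij, tsub_zero]
        rw [h1, h2, tsub_right_comm]
        congr 1
        ring
    | add p q hp hq => simp [hp, hq]

/-- The set of the partial derivative operators `∂ᵢ` on `ℝ[x₁, …, xₙ]`. -/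
def pdSet (n : ℕ) : Set (Module.End ℝ (MvPolynomial (Fin n) ℝ)) :=
  Set.range fun i : Fin n =>
    ((pderiv i : Derivation ℝ (MvPolynomial (Fin n) ℝ) (MvPolynomial (Fin n) ℝ)) :
      MvPolynomial (Fin n) ℝ →ₗ[ℝ] MvPolynomial (Fin n) ℝ)

instance pdCommRing (n : ℕ) : CommRing (Algebra.adjoin ℝ (pdSet n)) :=
  Algebra.adjoinCommRingOfComm ℝ (by
    rintro _ ⟨i, rfl⟩ _ ⟨j, rfl⟩
    apply LinearMap.ext
    intro f
    exact pderiv_commute i j f)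

/-- The algebra map sending a polynomial `f` (in the "∂ variables") to the differential
operator `f(∂₁, …, ∂ₙ)` acting on `ℝ[x₁, …, xₙ]`; thus `dop n f F` is the result of
applying the differential operator `f(∂₁, …, ∂ₙ)` to the polynomial `F`. -/
def dop (n : ℕ) : MvPolynomial (Fin n) ℝ →ₐ[ℝ] Module.End ℝ (MvPolynomial (Fin n) ℝ) :=
  (Algebra.adjoin ℝ (pdSet n)).val.comp
    (aeval fun i : Fin n =>
      (⟨_, Algebra.subset_adjoin (Set.mem_range_self i)⟩ : Algebra.adjoin ℝ (pdSet n)))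

/-- `Ann F`, the annihilator of `F`: the ideal of all differential-operator polynomials `f`
with `f(∂₁, …, ∂ₙ) F = 0`. -/
def annIdeal {n : ℕ} (F : MvPolynomial (Fin n) ℝ) : Ideal (MvPolynomial (Fin n) ℝ) where
  carrier := {f | dop n f F = 0}
  add_mem' := by
    intro a b ha hb
    simp only [Set.mem_setOf_eq] at *
    rw [map_add, LinearMap.add_apply, ha, hb, add_zero]
  zero_mem' := by
    simp only [Set.mem_setOf_eq, map_zero, LinearMap.zero_apply]
  smul_mem' := by
    intro c f hf
    simp only [Set.mem_setOf_eq] at *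
    rw [smul_eq_mul, map_mul, Module.End.mul_apply, hf, map_zero]

/-- The Artinian Gorenstein algebra `A_F = ℝ[∂₁, …, ∂ₙ]/Ann(F)`. -/
abbrev AF {n : ℕ} (F : MvPolynomial (Fin n) ℝ) := MvPolynomial (Fin n) ℝ ⧸ annIdeal F

/-- The degree-`k` homogeneous component `(A_F)_k` of `A_F`, as a submodule of `A_F`:
the image of the space of homogeneous polynomials of degree `k` under the quotient map. -/
def gradeA {n : ℕ} (F : MvPolynomial (Fin n) ℝ) (k : ℕ) : Submodule ℝ (AF F) :=
  Submodule.map (Ideal.Quotient.mkₐ ℝ (annIdeal F)).toLinearMap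
    (homogeneousSubmodule (Fin n) ℝ k)

/-- `ℓ ∈ A_F` is a strong Lefschetz element of `A_F` (with socle degree `s`) if the
multiplication map `×ℓ^(s-2k) : (A_F)_k → (A_F)_(s-k)` is bijective for every `k` with
`0 ≤ k ≤ s/2`. -/
def IsSLelem {n : ℕ} (F : MvPolynomial (Fin n) ℝ) (s : ℕ) (ℓ : AF F) : Prop :=
  ∀ k : ℕ, 2 * k ≤ s →
    Set.BijOn (fun f => ℓ ^ (s - 2 * k) * f) (gradeA F k) (gradeA F (s - k))

/-- `A_F` (with socle degree `s`) has the strong Lefschetz property. -/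
def HasSLP {n : ℕ} (F : MvPolynomial (Fin n) ℝ) (s : ℕ) : Prop :=
  ∃ ℓ ∈ gradeA F 1, IsSLelem F s ℓ

/-- `A_F` (with socle degree `s`) satisfies the Hodge–Riemann relation with respect to the
class `ℓ` of a linear form `L`: for every `k` with `0 ≤ k ≤ s/2`, the bilinear form
`Q^k_ℓ(f, g) = (-1)^k P^k(f, ℓ^(s-2k) g)` (where `P^k(f, g) = f g F` is the Poincaré duality
pairing) is positive definite on the kernel of `×ℓ^(s-2k+1) : (A_F)_k → (A_F)_(s-k+1)`,
i.e. `Q^k_ℓ(f, f) > 0` for every nonzero `f ∈ (A_F)_k` in that kernel. -/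
def SatisfiesHRR {n : ℕ} (F : MvPolynomial (Fin n) ℝ) (s : ℕ) (L : MvPolynomial (Fin n) ℝ) :
    Prop :=
  ∀ k : ℕ, 2 * k ≤ s →
    ∀ f ∈ homogeneousSubmodule (Fin n) ℝ k,
      dop n (L ^ (s - 2 * k + 1) * f) F = 0 →
      Ideal.Quotient.mk (annIdeal F) f ≠ 0 →
      0 < (-1 : ℝ) ^ k * constantCoeff (dop n (L ^ (s - 2 * k) * f * f) F)

/-- The facet polynomial of the regular hexahedron (cube)
(vertices `0,…,7` standing for `1,…,8`). -/
def Fhex : MvPolynomial (Fin 8) ℝ :=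
  X 0 * X 1 * X 2 * X 3 + X 1 * X 2 * X 5 * X 6 + X 2 * X 3 * X 6 * X 7 +
    X 0 * X 3 * X 4 * X 7 + X 0 * X 1 * X 4 * X 5 + X 4 * X 5 * X 6 * X 7

/-! Euler's identity shows that `ℓ = ∑ aᵢ ∂ᵢ` acts on forms of degree `d` by `ℓ^d G = d! • G(a)`.
Consequently, for a form `F` of degree `s`, `×ℓ^s : A₀ → A_s` is bijective as soon as `F(a) ≠ 0`,
and when `s = m + 2` the linear form `ℓ^m (∑ cᵢ ∂ᵢ) F` has coefficient vector `m! • H c`, where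
`H` is the Hessian of `F` at `a`; so `×ℓ^m : A₁ → A_{m+1}` is bijective when `H` is nonsingular,
and for `s = 4` the Hodge–Riemann form on `A₁` is `c ↦ -2 cᵀ H c` on primitive classes
(`aᵀ H c = 0`). For the cube `F(1) = 6` and the Hessian at `1` is nonsingular, but the vertex
vector "top face minus bottom face" is a primitive eigenvector of it with eigenvalue `1`, on which
the Hodge–Riemann form is negative. -/

open scoped Matrix

variable {n : ℕ}

lemma dop_mul_apply (p q G : MvPolynomial (Fin n) ℝ) :
    dop n (p * q) G = dop n p (dop n q G) := by
  rw [map_mul, Module.End.mul_apply]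

lemma dop_X_apply (i : Fin n) (G : MvPolynomial (Fin n) ℝ) : dop n (X i) G = pderiv i G := by
  simp [dop, aeval_X]

lemma dop_C_apply (c : ℝ) (G : MvPolynomial (Fin n) ℝ) : dop n (C c) G = C c * G := by
  have h := (dop n).commutes c
  rw [algebraMap_eq] at h
  rw [h, Module.algebraMap_end_apply, smul_eq_C_mul]

lemma MvPolynomial.IsHomogeneous.eq_C_coeff_zero {G : MvPolynomial (Fin n) ℝ}
    (hG : G.IsHomogeneous 0) : G = C (coeff 0 G) :=
  totalDegree_eq_zero_iff_eq_C.1 ((totalDegree_zero_iff_isHomogeneous _).2 hG)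

lemma MvPolynomial.IsHomogeneous.eq_of_forall_pderiv_eq {G H : MvPolynomial (Fin n) ℝ} {d : ℕ}
    (hG : G.IsHomogeneous d) (hH : H.IsHomogeneous d) (hd : d ≠ 0)
    (h : ∀ i, pderiv i G = pderiv i H) : G = H := by
  have euler : d • G = d • H := by
    rw [← hG.sum_X_mul_pderiv, ← hH.sum_X_mul_pderiv]
    simp only [h]
  exact nsmul_right_injective hd euler

theorem MvPolynomial.IsHomogeneous.dop {p F : MvPolynomial (Fin n) ℝ} {d s : ℕ}
    (hp : p.IsHomogeneous d) (hF : F.IsHomogeneous s) : (dop n p F).IsHomogeneous (s - d) := by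
  induction d generalizing p F s with
  | zero =>
    rw [IsHomogeneous.eq_C_coeff_zero hp, dop_C_apply]
    simpa using hF.C_mul _
  | succ d ih =>
    -- Euler's identity writes `p` through its partial derivatives, which have degree `d`.
    have euler : p = ∑ i, C ((d + 1 : ℝ)⁻¹) * (X i * pderiv i p) := by
      rw [← Finset.mul_sum, hp.sum_X_mul_pderiv, nsmul_eq_mul, ← mul_assoc, ← map_natCast C,
        ← MvPolynomial.C_mul]
      push_cast
      rw [inv_mul_cancel₀ (by positivity), C_1, one_mul]
    rw [euler, map_sum, LinearMap.coe_sum, Finset.sum_apply]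
    refine IsHomogeneous.sum _ _ _ fun i _ => ?_
    rw [dop_mul_apply, dop_C_apply, dop_mul_apply, dop_X_apply,
      show s - (d + 1) = s - d - 1 by omega]
    exact (ih hp.pderiv hF).pderiv.C_mul _

def linearForm (a : Fin n → ℝ) : MvPolynomial (Fin n) ℝ := ∑ i, C (a i) * X i

lemma isHomogeneous_linearForm (a : Fin n → ℝ) : (linearForm a).IsHomogeneous 1 :=
  IsHomogeneous.sum _ _ _ fun _ _ => isHomogeneous_C_mul_X _ _

lemma linearForm_one : linearForm (1 : Fin n → ℝ) = ∑ i, X i := by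
  simp [linearForm]

lemma linearForm_zero : linearForm (0 : Fin n → ℝ) = 0 := by
  simp [linearForm]

lemma pderiv_linearForm (a : Fin n → ℝ) (i : Fin n) : pderiv i (linearForm a) = C (a i) := by
  simp [linearForm, pderiv_X, Pi.single_apply]

lemma dop_linearForm_apply (a : Fin n → ℝ) (G : MvPolynomial (Fin n) ℝ) :
    dop n (linearForm a) G = ∑ i, C (a i) * pderiv i G := by
  simp [linearForm, dop_X_apply, smul_eq_C_mul]

lemma dop_linearForm_linearForm (a b : Fin n → ℝ) :
    dop n (linearForm a) (linearForm b) = C (a ⬝ᵥ b) := by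
  simp [dop_linearForm_apply, pderiv_linearForm, dotProduct]

lemma linearForm_injective : Function.Injective (linearForm (n := n)) := fun a b h =>
  funext fun i => C_injective _ _ (by rw [← pderiv_linearForm, h, pderiv_linearForm])

lemma MvPolynomial.IsHomogeneous.exists_eq_linearForm {G : MvPolynomial (Fin n) ℝ}
    (hG : G.IsHomogeneous 1) : ∃ a, G = linearForm a := by
  refine ⟨fun i => coeff 0 (pderiv i G), hG.eq_of_forall_pderiv_eq (isHomogeneous_linearForm _)
    one_ne_zero fun i => ?_⟩
  rw [pderiv_linearForm, ← hG.pderiv.eq_C_coeff_zero]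

lemma eval_dop_linearForm (a : Fin n → ℝ) {G : MvPolynomial (Fin n) ℝ} {d : ℕ}
    (hG : G.IsHomogeneous d) : eval a (dop n (linearForm a) G) = d * eval a G := by
  have euler := congrArg (eval a) hG.sum_X_mul_pderiv
  simp only [map_sum, map_mul, eval_X, nsmul_eq_mul] at euler
  simp [dop_linearForm_apply, euler]

theorem dop_linearForm_pow {G : MvPolynomial (Fin n) ℝ} {d : ℕ} (a : Fin n → ℝ)
    (hG : G.IsHomogeneous d) : dop n (linearForm a ^ d) G = C (d.factorial * eval a G) := by
  induction d generalizing G with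
  | zero =>
    rw [hG.eq_C_coeff_zero]
    simp
  | succ d ih =>
    have hLG : (dop n (linearForm a) G).IsHomogeneous d := (isHomogeneous_linearForm a).dop hG
    rw [pow_succ, dop_mul_apply, ih hLG, eval_dop_linearForm a hG, Nat.factorial_succ]
    push_cast
    ring_nf

def hessianAt (F : MvPolynomial (Fin n) ℝ) (a : Fin n → ℝ) : Matrix (Fin n) (Fin n) ℝ :=
  Matrix.of fun i j => eval a (pderiv i (pderiv j F))

theorem dop_linearForm_pow_mul_linearForm {F : MvPolynomial (Fin n) ℝ} {m : ℕ}
    (hF : F.IsHomogeneous (m + 2)) (a c : Fin n → ℝ) :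
    dop n (linearForm a ^ m * linearForm c) F
      = linearForm ((m.factorial : ℝ) • (hessianAt F a *ᵥ c)) := by
  have hcF : (dop n (linearForm c) F).IsHomogeneous (m + 1) :=
    (isHomogeneous_linearForm c).dop hF
  have hLcF : (dop n (linearForm a ^ m) (dop n (linearForm c) F)).IsHomogeneous 1 := by
    simpa using ((isHomogeneous_linearForm a).pow m).dop hcF
  rw [dop_mul_apply]
  refine hLcF.eq_of_forall_pderiv_eq (isHomogeneous_linearForm _) one_ne_zero fun j => ?_
  rw [← dop_X_apply, ← dop_mul_apply, mul_comm, dop_mul_apply, dop_X_apply,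
    dop_linearForm_pow a (by simpa using hcF.pderiv), pderiv_linearForm]
  simp [dop_linearForm_apply, hessianAt, Matrix.mulVec, dotProduct, mul_comm]

section GorensteinAlgebra

variable {F : MvPolynomial (Fin n) ℝ}

lemma mk_annIdeal_eq_mk_iff {p q : MvPolynomial (Fin n) ℝ} :
    Ideal.Quotient.mk (annIdeal F) p = Ideal.Quotient.mk (annIdeal F) q ↔
      dop n p F = dop n q F := by
  rw [Ideal.Quotient.eq, ← sub_eq_zero, ← LinearMap.sub_apply, ← map_sub]
  rfl

lemma mem_gradeA_iff {k : ℕ} {x : AF F} :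
    x ∈ gradeA F k ↔ ∃ p, p.IsHomogeneous k ∧ Ideal.Quotient.mk (annIdeal F) p = x := by
  simp [gradeA, mem_homogeneousSubmodule]

theorem bijOn_mul_pow_gradeA {L : MvPolynomial (Fin n) ℝ} (hL : L.IsHomogeneous 1) {k m : ℕ}
    (hinj : ∀ p, p.IsHomogeneous k → dop n (L ^ m * p) F = 0 → dop n p F = 0)
    (hsurj : ∀ p, p.IsHomogeneous (k + m) →
      ∃ q, q.IsHomogeneous k ∧ dop n (L ^ m * q) F = dop n p F) :
    Set.BijOn (fun f => Ideal.Quotient.mk (annIdeal F) L ^ m * f)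
      (gradeA F k) (gradeA F (k + m)) := by
  refine ⟨?_, ?_, ?_⟩
  · intro x hx
    obtain ⟨p, hp, rfl⟩ := mem_gradeA_iff.1 hx
    exact mem_gradeA_iff.2 ⟨_, by simpa [add_comm] using (hL.pow m).mul hp, by simp⟩
  · intro x hx y hy h
    obtain ⟨p, hp, rfl⟩ := mem_gradeA_iff.1 hx
    obtain ⟨q, hq, rfl⟩ := mem_gradeA_iff.1 hy
    simp only [← map_pow, ← map_mul] at h
    rw [mk_annIdeal_eq_mk_iff, ← sub_eq_zero, ← LinearMap.sub_apply, ← map_sub, ← mul_sub] at h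
    rw [mk_annIdeal_eq_mk_iff, ← sub_eq_zero, ← LinearMap.sub_apply, ← map_sub]
    exact hinj _ (hp.sub hq) h
  · intro x hx
    obtain ⟨p, hp, rfl⟩ := mem_gradeA_iff.1 hx
    obtain ⟨q, hq, h⟩ := hsurj p hp
    refine ⟨_, mem_gradeA_iff.2 ⟨q, hq, rfl⟩, ?_⟩
    simpa [← map_pow, ← map_mul] using mk_annIdeal_eq_mk_iff.2 h

theorem bijOn_mul_linearForm_pow_gradeA_zero {s : ℕ} (hF : F.IsHomogeneous s)
    {a : Fin n → ℝ} (ha : eval a F ≠ 0) :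
    Set.BijOn (fun f => Ideal.Quotient.mk (annIdeal F) (linearForm a) ^ s * f)
      (gradeA F 0) (gradeA F (0 + s)) := by
  have hfac : (s.factorial : ℝ) * eval a F ≠ 0 := mul_ne_zero (by positivity) ha
  have key (b : ℝ) : dop n (linearForm a ^ s * C b) F = C (b * (s.factorial * eval a F)) := by
    rw [mul_comm, dop_mul_apply, dop_C_apply, dop_linearForm_pow a hF, ← C_mul]
  refine bijOn_mul_pow_gradeA (isHomogeneous_linearForm a) (fun p hp h => ?_) (fun p hp => ?_)
  · rw [hp.eq_C_coeff_zero, key, C_eq_zero, mul_eq_zero, or_iff_left hfac] at h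
    rw [hp.eq_C_coeff_zero, h, C_0, map_zero, LinearMap.zero_apply]
  · have hpF : (dop n p F).IsHomogeneous 0 := by simpa using hp.dop hF
    refine ⟨C (coeff 0 (dop n p F) / (s.factorial * eval a F)), isHomogeneous_C _ _, ?_⟩
    rw [key, div_mul_cancel₀ _ hfac, ← hpF.eq_C_coeff_zero]

theorem bijOn_mul_linearForm_pow_gradeA_one {m : ℕ} (hF : F.IsHomogeneous (m + 2))
    {a : Fin n → ℝ} (hH : Function.Injective (hessianAt F a).mulVec) :
    Set.BijOn (fun f => Ideal.Quotient.mk (annIdeal F) (linearForm a) ^ m * f)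
      (gradeA F 1) (gradeA F (1 + m)) := by
  have hfac : (m.factorial : ℝ) ≠ 0 := by positivity
  refine bijOn_mul_pow_gradeA (isHomogeneous_linearForm a) (fun p hp h => ?_) (fun p hp => ?_)
  · obtain ⟨c, rfl⟩ := hp.exists_eq_linearForm
    rw [dop_linearForm_pow_mul_linearForm hF, ← linearForm_zero] at h
    have hc : hessianAt F a *ᵥ c = hessianAt F a *ᵥ 0 := by
      simpa [hfac] using linearForm_injective h
    rw [hH hc, linearForm_zero, map_zero, LinearMap.zero_apply]
  · have hpF : (dop n p F).IsHomogeneous 1 := by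
      simpa [show m + 2 - (1 + m) = 1 by omega] using hp.dop hF
    obtain ⟨b, hb⟩ := hpF.exists_eq_linearForm
    obtain ⟨c, hc⟩ := Matrix.mulVec_surjective_iff_isUnit.2
      (Matrix.mulVec_injective_iff_isUnit.1 hH) ((m.factorial : ℝ)⁻¹ • b)
    refine ⟨linearForm c, isHomogeneous_linearForm c, ?_⟩
    rw [dop_linearForm_pow_mul_linearForm hF, hc, smul_inv_smul₀ hfac, hb]

theorem isSLelem_of_isHomogeneous_four (hF : F.IsHomogeneous 4) {a : Fin n → ℝ}
    (ha : eval a F ≠ 0) (hH : Function.Injective (hessianAt F a).mulVec) :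
    IsSLelem F 4 (Ideal.Quotient.mk (annIdeal F) (linearForm a)) := by
  intro k hk
  obtain rfl | rfl | rfl : k = 0 ∨ k = 1 ∨ k = 2 := by omega
  · exact bijOn_mul_linearForm_pow_gradeA_zero hF ha
  · exact bijOn_mul_linearForm_pow_gradeA_one hF hH
  · simp only [Nat.reduceMul, Nat.reduceSub, pow_zero, one_mul]
    exact Set.bijOn_id _

theorem not_satisfiesHRR_of_isHomogeneous_four (hF : F.IsHomogeneous 4) {a c : Fin n → ℝ}
    (hprim : a ⬝ᵥ (hessianAt F a *ᵥ c) = 0) (hpos : 0 < c ⬝ᵥ (hessianAt F a *ᵥ c)) :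
    ¬ SatisfiesHRR F 4 (linearForm a) := by
  intro hrr
  have h2 : dop n (linearForm a ^ 2 * linearForm c) F
      = linearForm ((2 : ℝ) • (hessianAt F a *ᵥ c)) := by
    rw [dop_linearForm_pow_mul_linearForm hF]
    norm_num [Nat.factorial]
  have hQ : dop n (linearForm a ^ 2 * linearForm c * linearForm c) F
      = C (2 * (c ⬝ᵥ (hessianAt F a *ᵥ c))) := by
    rw [mul_comm, dop_mul_apply, h2, dop_linearForm_linearForm, dotProduct_smul, smul_eq_mul]
  have hker : dop n (linearForm a ^ 3 * linearForm c) F = 0 := by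
    rw [pow_succ', mul_assoc, dop_mul_apply, h2, dop_linearForm_linearForm, dotProduct_smul,
      hprim, smul_zero, C_0]
  have hne : Ideal.Quotient.mk (annIdeal F) (linearForm c) ≠ 0 := by
    intro h
    have hcF : dop n (linearForm c) F = 0 := Ideal.Quotient.eq_zero_iff_mem.1 h
    have h0 : C (2 * (c ⬝ᵥ (hessianAt F a *ᵥ c))) = (0 : MvPolynomial (Fin n) ℝ) := by
      rw [← hQ, mul_assoc, dop_mul_apply, dop_mul_apply, hcF, map_zero, map_zero]
    rw [C_eq_zero] at h0
    linarith
  have := hrr 1 (by norm_num) (linearForm c)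
    ((mem_homogeneousSubmodule _ _).2 (isHomogeneous_linearForm c)) hker hne
  rw [show 4 - 2 * 1 = 2 from rfl, hQ, constantCoeff_C, pow_one] at this
  linarith

end GorensteinAlgebra

lemma isHomogeneous_Fhex : Fhex.IsHomogeneous 4 := by
  have h (a b c d : Fin 8) : (X a * X b * X c * X d : MvPolynomial (Fin 8) ℝ).IsHomogeneous 4 :=
    (((isHomogeneous_X ℝ a).mul (isHomogeneous_X ℝ b)).mul (isHomogeneous_X ℝ c)).mul
      (isHomogeneous_X ℝ d)
  unfold Fhex
  repeat' apply IsHomogeneous.add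
  all_goals apply h

lemma eval_one_Fhex : eval 1 Fhex = 6 := by
  norm_num [Fhex]

-- Off the diagonal, entry `(i, j)` counts the faces of the cube through the vertices `i` and `j`.
lemma hessianAt_Fhex_one : hessianAt Fhex 1 =
    !![0, 2, 1, 2, 2, 1, 0, 1;
       2, 0, 2, 1, 1, 2, 1, 0;
       1, 2, 0, 2, 0, 1, 2, 1;
       2, 1, 2, 0, 1, 0, 1, 2;
       2, 1, 0, 1, 0, 2, 1, 2;
       1, 2, 1, 0, 2, 0, 2, 1;
       0, 1, 2, 1, 1, 2, 0, 2;
       1, 0, 1, 2, 2, 1, 2, 0] := by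
  ext i j
  simp only [hessianAt, Fhex, Matrix.of_apply, map_add, Derivation.leibniz, pderiv_X,
    smul_eq_mul, map_mul, eval_X, Pi.one_apply, mul_one, one_mul, Pi.single_apply]
  fin_cases i <;> fin_cases j <;> simp [one_add_one_eq_two]

lemma injective_mulVec_hessianAt_Fhex_one : Function.Injective (hessianAt Fhex 1).mulVec := by
  intro v w h
  have e := congrFun h
  simp only [Matrix.mulVec, dotProduct, hessianAt_Fhex_one, Matrix.of_apply, Matrix.cons_val',
    Matrix.cons_val_fin_one, Fin.sum_univ_succ, Fin.isValue, Matrix.cons_val_zero,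
    Matrix.cons_val_succ, Fin.succ_zero_eq_one, Fin.succ_one_eq_two, Fin.reduceSucc,
    Finset.univ_unique, Fin.default_eq_zero, Finset.sum_singleton, Fin.forall_fin_succ, zero_mul,
    one_mul, zero_add, add_zero, forall_const] at e
  obtain ⟨e0, e1, e2, e3, e4, e5, e6, e7⟩ := e
  funext i
  fin_cases i <;> simp <;> linarith

lemma hessianAt_Fhex_one_mulVec_topMinusBottom :
    hessianAt Fhex 1 *ᵥ ![1, 1, 1, 1, -1, -1, -1, -1] = ![1, 1, 1, 1, -1, -1, -1, -1] := by
  ext i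
  fin_cases i <;> norm_num [hessianAt_Fhex_one, Matrix.mulVec, dotProduct, Fin.sum_univ_succ]

/-- `ℓ = ∂₁ + ⋯ + ∂₈` is a strong Lefschetz element of the algebra associated to the regular
hexahedron (so the algebra has the strong Lefschetz property), but the algebra does not
satisfy the Hodge–Riemann relation with respect to `ℓ`. -/
theorem hexahedron_sl_element_but_not_hrr :
    IsSLelem Fhex 4 (Ideal.Quotient.mk (annIdeal Fhex) (∑ i, X i)) ∧
      HasSLP Fhex 4 ∧ ¬ SatisfiesHRR Fhex 4 (∑ i, X i) := by
  have hSL : IsSLelem Fhex 4 (Ideal.Quotient.mk (annIdeal Fhex) (∑ i, X i)) := by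
    rw [← linearForm_one]
    exact isSLelem_of_isHomogeneous_four isHomogeneous_Fhex (by norm_num [eval_one_Fhex])
      injective_mulVec_hessianAt_Fhex_one
  have hℓ : Ideal.Quotient.mk (annIdeal Fhex) (∑ i, X i) ∈ gradeA Fhex 1 :=
    mem_gradeA_iff.2 ⟨_, linearForm_one ▸ isHomogeneous_linearForm 1, rfl⟩
  refine ⟨hSL, ⟨_, hℓ, hSL⟩, ?_⟩
  rw [← linearForm_one]
  apply not_satisfiesHRR_of_isHomogeneous_four isHomogeneous_Fhex
    (c := ![1, 1, 1, 1, -1, -1, -1, -1]) <;>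
    norm_num [hessianAt_Fhex_one_mulVec_topMinusBottom, dotProduct, Fin.sum_univ_succ]

end
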